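/- arXiv:2210.02216 — 4 statements merged into one kernel-verified Lean document; each statement's English description precedes it below -/
import Mathlib

section
/- Let (X, τ₁, τ₂) be a refined bitopological space (τ₁ ⊆ τ₂). Then the map I₁C₂ (interior in τ₁ composed with closure in τ₂) is a nucleus on the complete Heyting algebra of τ₁-open sets: it preserves binary intersections of τ₁-open sets, and every τ₁-open set U satisfies U ⊆ I₁C₂(U). -/
section Helpers

variable {X : Type*}

private lemma hlp_int_sub (t : TopologicalSpace X) (s : Set X) :
    @interior X t s ⊆ s := by letI := t; exact interior_subset

private lemma hlp_int_max (t : TopologicalSpace X) {s u : Set X}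
    (h : s ⊆ u) (hs : @IsOpen X t s) : s ⊆ @interior X t u := by
  letI := t; exact interior_maximal h hs

private lemma hlp_sub_cl (t : TopologicalSpace X) (s : Set X) :
    s ⊆ @closure X t s := by letI := t; exact subset_closure

private lemma hlp_int_mono (t : TopologicalSpace X) {s u : Set X} (h : s ⊆ u) :
    @interior X t s ⊆ @interior X t u := by letI := t; exact interior_mono h

private lemma hlp_cl_mono (t : TopologicalSpace X) {s u : Set X} (h : s ⊆ u) :
    @closure X t s ⊆ @closure X t u := by letI := t; exact closure_mono h

private lemma hlp_isOpen_int (t : TopologicalSpace X) (s : Set X) :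
    @IsOpen X t (@interior X t s) := by letI := t; exact isOpen_interior

private lemma hlp_inter (t : TopologicalSpace X) {s u : Set X}
    (hs : @IsOpen X t s) (hu : @IsOpen X t u) : @IsOpen X t (s ∩ u) := by
  letI := t; exact hs.inter hu

private lemma hlp_open_inter_cl (t : TopologicalSpace X) {s u : Set X}
    (hs : @IsOpen X t s) : s ∩ @closure X t u ⊆ @closure X t (s ∩ u) := by
  letI := t; exact hs.inter_closure

private lemma hlp_cl_cl (t : TopologicalSpace X) (s : Set X) :
    @closure X t (@closure X t s) = @closure X t s := by
  letI := t; exact closure_closure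

end Helpers

/-- In a refined bitopological space (`t₁ ⊆ t₂`), the map `I₁ ∘ C₂` is a nucleus on the
frame of `t₁`-open sets: it preserves binary intersections of `t₁`-open sets and is
inflationary on `t₁`-open sets. -/
theorem refinedBitop_IC_nucleus {X : Type*} (t1 t2 : TopologicalSpace X)
    (hsub : ∀ U : Set X, @IsOpen X t1 U → @IsOpen X t2 U) :
    (∀ U V : Set X, @IsOpen X t1 U → @IsOpen X t1 V →
      @interior X t1 (@closure X t2 (U ∩ V)) =
        @interior X t1 (@closure X t2 U) ∩ @interior X t1 (@closure X t2 V)) ∧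
    (∀ U : Set X, @IsOpen X t1 U → U ⊆ @interior X t1 (@closure X t2 U)) := by
  refine ⟨fun U V hU hV => ?_, fun U hU => hlp_int_max t1 (hlp_sub_cl t2 U) hU⟩
  apply subset_antisymm
  · exact Set.subset_inter
      (hlp_int_mono t1 (hlp_cl_mono t2 Set.inter_subset_left))
      (hlp_int_mono t1 (hlp_cl_mono t2 Set.inter_subset_right))
  · set W := @interior X t1 (@closure X t2 U) ∩ @interior X t1 (@closure X t2 V) with hW
    have hWopen1 : @IsOpen X t1 W :=
      hlp_inter t1 (hlp_isOpen_int t1 _) (hlp_isOpen_int t1 _)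
    have hWopen2 : @IsOpen X t2 W := hsub W hWopen1
    have h1 : W ⊆ @closure X t2 (W ∩ U) := fun x hx =>
      hlp_open_inter_cl t2 hWopen2 ⟨hx, hlp_int_sub t1 _ hx.1⟩
    have h2 : W ∩ U ⊆ @closure X t2 (U ∩ V) := by
      have hWU : @IsOpen X t2 (W ∩ U) := hlp_inter t2 hWopen2 (hsub U hU)
      have step : W ∩ U ⊆ @closure X t2 ((W ∩ U) ∩ V) := fun x hx =>
        hlp_open_inter_cl t2 hWU ⟨hx, hlp_int_sub t1 _ hx.1.2⟩
      exact step.trans (hlp_cl_mono t2 (fun x hx => ⟨hx.1.2, hx.2⟩))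
    have h3 : W ⊆ @closure X t2 (U ∩ V) := by
      have := h1.trans (hlp_cl_mono t2 h2)
      rwa [hlp_cl_cl t2] at this
    exact hlp_int_max t1 h3 hWopen1
end

section
/- Let (X, τ₁, τ₂) be a refined bitopological space. For any two refined regular open sets Y, Z ∈ RO₁₂(X), the set I₁((X − Y) ∪ Z) is again in RO₁₂(X) and is the relative pseudo-complement of Y and Z in RO₁₂(X), i.e., for all W ∈ RO₁₂(X): W ∩ Y ⊆ Z iff W ⊆ I₁((X − Y) ∪ Z). -/
/-!
Relative pseudo-complements of τ₁-open sets are `I₁(Yᶜ ∪ Z)`, so the point is that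
`V = I₁(Yᶜ ∪ Z)` is refined regular open. Since `Y` is τ₂-open,
`C₂V ∩ Y ⊆ C₂(V ∩ Y) ⊆ C₂Z`, so the τ₁-open set `I₁C₂V ∩ Y` lies in `I₁C₂Z = Z`,
which says `I₁C₂V ⊆ V`.
-/
open Topology

theorem IsOpen.inter_subset_iff_subset_interior_compl_union {X : Type*} [TopologicalSpace X]
    {W Y Z : Set X} (hW : IsOpen W) : W ∩ Y ⊆ Z ↔ W ⊆ interior (Yᶜ ∪ Z) := by
  rw [hW.subset_interior_iff, Set.inter_subset]

section RefinedRegularOpen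

variable {X : Type*} {t₁ t₂ : TopologicalSpace X}

theorem subset_interior_closure_of_isOpen {V : Set X} (hV : IsOpen[t₁] V) :
    V ⊆ @interior X t₁ (closure[t₂] V) :=
  (@IsOpen.subset_interior_iff X t₁ _ _ hV).2 subset_closure

theorem interior_closure_inter_subset {Y V S : Set X} (hY₁ : IsOpen[t₁] Y)
    (hY₂ : IsOpen[t₂] Y) (h : V ∩ Y ⊆ S) :
    @interior X t₁ (closure[t₂] V) ∩ Y ⊆ @interior X t₁ (closure[t₂] S) := by
  have hopen : IsOpen[t₁] (@interior X t₁ (closure[t₂] V) ∩ Y) :=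
    @IsOpen.inter X t₁ _ _ (@isOpen_interior X t₁ _) hY₁
  refine (@IsOpen.subset_interior_iff X t₁ _ _ hopen).2 ?_
  calc @interior X t₁ (closure[t₂] V) ∩ Y ⊆ closure[t₂] V ∩ Y :=
        Set.inter_subset_inter_left _ (@interior_subset X t₁ _)
    _ ⊆ closure[t₂] (V ∩ Y) := hY₂.closure_inter
    _ ⊆ closure[t₂] S := closure_mono h

theorem interior_compl_union_eq_interior_closure {Y Z : Set X} (hY₁ : IsOpen[t₁] Y)
    (hY₂ : IsOpen[t₂] Y) (hZ : Z = @interior X t₁ (closure[t₂] Z)) :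
    @interior X t₁ (Yᶜ ∪ Z) = @interior X t₁ (closure[t₂] (@interior X t₁ (Yᶜ ∪ Z))) := by
  set V := @interior X t₁ (Yᶜ ∪ Z)
  have hV : IsOpen[t₁] V := @isOpen_interior X t₁ _
  refine (subset_interior_closure_of_isOpen hV).antisymm ?_
  have hVY : V ∩ Y ⊆ Z :=
    (@IsOpen.inter_subset_iff_subset_interior_compl_union X t₁ _ _ _ hV).2 subset_rfl
  have hclosure : @interior X t₁ (closure[t₂] V) ∩ Y ⊆ Z :=
    hZ ▸ interior_closure_inter_subset hY₁ hY₂ hVY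
  exact (@IsOpen.inter_subset_iff_subset_interior_compl_union X t₁ _ _ _
    (@isOpen_interior X t₁ _)).1 hclosure

end RefinedRegularOpen

/-- For refined regular open sets `Y, Z`, the set `I₁((X \ Y) ∪ Z)` is again refined
regular open and is the relative pseudo-complement of `Y` and `Z` in `RO₁₂(X)`. -/
theorem refinedRegularOpen_himp {X : Type*} (t1 t2 : TopologicalSpace X)
    (hsub : ∀ U : Set X, @IsOpen X t1 U → @IsOpen X t2 U)
    (Y Z : Set X)
    (hY : Y = @interior X t1 (@closure X t2 Y))
    (hZ : Z = @interior X t1 (@closure X t2 Z)) :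
    (@interior X t1 (Yᶜ ∪ Z) =
      @interior X t1 (@closure X t2 (@interior X t1 (Yᶜ ∪ Z)))) ∧
    (∀ W : Set X, W = @interior X t1 (@closure X t2 W) →
      (W ∩ Y ⊆ Z ↔ W ⊆ @interior X t1 (Yᶜ ∪ Z))) := by
  have hY₁ : IsOpen[t1] Y := hY ▸ @isOpen_interior X t1 _
  refine ⟨interior_compl_union_eq_interior_closure hY₁ (hsub Y hY₁) hZ, fun W hW => ?_⟩
  exact @IsOpen.inter_subset_iff_subset_interior_compl_union X t1 _ _ _
    (hW ▸ @isOpen_interior X t1 _)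
end

section
/- Let (X, ≤₁, ≤₂) be an FM frame (≤₂ ⊆ ≤₁ partial orders on X) with associated Alexandroff topologies of upsets. For any subset Y ⊆ X, the refined regular open closure c(Y) = I₁C₂(↑₁Y) is the smallest refined regular open set containing Y, where ↑₁Y is the ≤₁-upward closure of Y. -/
/-- `I₁C₂` for the Alexandroff upset topologies of an FM frame:
`x ∈ I₁C₂ A` iff every `≤₁`-successor of `x` has a `≤₂`-successor in `A`. -/
def fmIC {X : Type*} (le1 le2 : X → X → Prop) (A : Set X) : Set X :=
  {x | ∀ y, le1 x y → ∃ z, le2 y z ∧ z ∈ A}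

/-- The `≤₁`-upward closure. -/
def fmUp1 {X : Type*} (le1 : X → X → Prop) (Y : Set X) : Set X :=
  {x | ∃ y ∈ Y, le1 y x}

/-! `I₁C₂` is monotone and every set of the form `I₁C₂ A` is a `≤₁`-upset; reflexivity and
transitivity of both orders make `I₁C₂` idempotent. Hence `c(Y)` is refined regular open and
contains `Y`, and a refined regular open `Z ⊇ Y` is a `≤₁`-upset, so `↑₁Y ⊆ Z` and
`c(Y) ⊆ I₁C₂ Z = Z`. -/

section FMFrame

variable {X : Type*} {le1 le2 : X → X → Prop}

theorem fmIC_mono {A B : Set X} (h : A ⊆ B) : fmIC le1 le2 A ⊆ fmIC le1 le2 B :=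
  fun _ hx y hxy ↦ (hx y hxy).imp fun _ ⟨hyz, hz⟩ ↦ ⟨hyz, h hz⟩

theorem mem_fmIC_of_le1 [IsTrans X le1] {A : Set X} {x x' : X} (hx : x ∈ fmIC le1 le2 A)
    (hxx' : le1 x x') : x' ∈ fmIC le1 le2 A :=
  fun y hx'y ↦ hx y (trans_of le1 hxx' hx'y)

theorem fmIC_subset_fmIC_fmIC [IsTrans X le1] [Std.Refl le2] (A : Set X) :
    fmIC le1 le2 A ⊆ fmIC le1 le2 (fmIC le1 le2 A) :=
  fun _ hx y hxy ↦ ⟨y, refl_of le2 y, mem_fmIC_of_le1 hx hxy⟩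

theorem fmIC_fmIC_subset_fmIC [Std.Refl le1] [IsTrans X le2] (A : Set X) :
    fmIC le1 le2 (fmIC le1 le2 A) ⊆ fmIC le1 le2 A := by
  intro x hx y hxy
  obtain ⟨z, hyz, hz⟩ := hx y hxy
  obtain ⟨w, hzw, hw⟩ := hz z (refl_of le1 z)
  exact ⟨w, trans_of le2 hyz hzw, hw⟩

theorem fmIC_fmIC [IsPreorder X le1] [IsPreorder X le2] (A : Set X) :
    fmIC le1 le2 (fmIC le1 le2 A) = fmIC le1 le2 A :=
  (fmIC_fmIC_subset_fmIC A).antisymm (fmIC_subset_fmIC_fmIC A)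

theorem subset_fmIC_fmUp1 [Std.Refl le2] (Y : Set X) : Y ⊆ fmIC le1 le2 (fmUp1 le1 Y) :=
  fun x hx y hxy ↦ ⟨y, refl_of le2 y, x, hx, hxy⟩

theorem fmUp1_subset_of_eq_fmIC [IsTrans X le1] {Y Z : Set X} (hZ : Z = fmIC le1 le2 Z)
    (hYZ : Y ⊆ Z) : fmUp1 le1 Y ⊆ Z := by
  rintro x ⟨y, hy, hyx⟩
  rw [hZ] at hYZ ⊢
  exact mem_fmIC_of_le1 (hYZ hy) hyx

end FMFrame

theorem fm_refinedRegularOpenClosure_general {X : Type*} (le1 le2 : X → X → Prop)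
    [IsPartialOrder X le1] [IsPartialOrder X le2]
    (Y : Set X) :
    fmIC le1 le2 (fmUp1 le1 Y) = fmIC le1 le2 (fmIC le1 le2 (fmUp1 le1 Y)) ∧
    Y ⊆ fmIC le1 le2 (fmUp1 le1 Y) ∧
    (∀ Z : Set X, Z = fmIC le1 le2 Z → Y ⊆ Z → fmIC le1 le2 (fmUp1 le1 Y) ⊆ Z) := by
  refine ⟨(fmIC_fmIC _).symm, subset_fmIC_fmUp1 Y, fun Z hZ hYZ ↦ ?_⟩
  calc fmIC le1 le2 (fmUp1 le1 Y) ⊆ fmIC le1 le2 Z := fmIC_mono (fmUp1_subset_of_eq_fmIC hZ hYZ)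
    _ = Z := hZ.symm

/-- In an FM frame, `c(Y) = I₁C₂(↑₁Y)` is the smallest refined regular open set
containing `Y`. -/
theorem fm_refinedRegularOpenClosure {X : Type*} (le1 le2 : X → X → Prop)
    [IsPartialOrder X le1] [IsPartialOrder X le2]
    (hsub : ∀ x y, le2 x y → le1 x y) (Y : Set X) :
    fmIC le1 le2 (fmUp1 le1 Y) = fmIC le1 le2 (fmIC le1 le2 (fmUp1 le1 Y)) ∧
    Y ⊆ fmIC le1 le2 (fmUp1 le1 Y) ∧
    (∀ Z : Set X, Z = fmIC le1 le2 Z → Y ⊆ Z → fmIC le1 le2 (fmUp1 le1 Y) ⊆ Z) :=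
  fm_refinedRegularOpenClosure_general le1 le2 Y
end

section
/- (Right-handed Ackermann lemma, lattice form.) Let L be a complete lattice, θ : L → L a constant function with value t (independent of the argument), and let η, ψ : L → L be monotone and ι, φ : L → L be antitone functions. Then the following are equivalent: (1) for all a ∈ L, (t ≤ a and η(a) ≤ ι(a)) implies φ(a) ≤ ψ(a); (2) η(t) ≤ ι(t) implies φ(t) ≤ ψ(t). -/
/-- Right-handed Ackermann lemma, lattice form. -/
theorem rightHanded_ackermann {L : Type*} [CompleteLattice L] (t : L)
    (η ψ ι φ : L → L)
    (hη : Monotone η) (hψ : Monotone ψ) (hι : Antitone ι) (hφ : Antitone φ) :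
    (∀ a : L, t ≤ a → η a ≤ ι a → φ a ≤ ψ a) ↔ (η t ≤ ι t → φ t ≤ ψ t) := by
  constructor
  · intro h ht; exact h t le_rfl ht
  · intro h a hta hai
    have : φ t ≤ ψ t := h ((hη hta).trans (hai.trans (hι hta)))
    exact (hφ hta).trans (this.trans (hψ hta))
end
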